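/- arXiv:2101.07247 — 2 statements merged into one kernel-verified Lean document; each statement's English description precedes it below -/
import Mathlib

section
/- Let G be an infinite graph obtained from the complete graph on ℵ₁ vertices by attaching to each vertex v a new ray R_v meeting the complete graph exactly in its first vertex v, with the rays R_v pairwise disjoint. Then the direction of G induced by the rays lying inside the complete graph K^{ℵ₁} is not countably determined in G. -/
/-! Common definitions: rays, ends (à la Halin), the end space, directions
(via Mathlib's `SimpleGraph.end`), domination, generalised paths, etc. -/

open Classical SimpleGraph

universe u

variable {V : Type u}

/-- A ray in `G`: a one-way infinite path. -/
structure Ray (G : SimpleGraph V) where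
  f : ℕ → V
  inj : Function.Injective f
  adj : ∀ n, G.Adj (f n) (f (n + 1))

namespace Ray

variable {G : SimpleGraph V}

/-- `R` has a tail inside the vertex set `S`. -/
def TailIn (R : Ray G) (S : Set V) : Prop :=
  ∃ N, ∀ n, N ≤ n → R.f n ∈ S

/-- The set of the first `n` vertices of `R`. -/
noncomputable def initSeg (R : Ray G) (n : ℕ) : Finset V :=
  (Finset.range n).image R.f

end Ray

/-- Two rays are equivalent if no finite vertex set separates them, i.e. for
every finite `X` they have tails in a common component of `G - X`. -/
def RayEquiv (G : SimpleGraph V) (R S : Ray G) : Prop :=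
  ∀ X : Finset V, ∃ C : G.ComponentCompl (X : Set V), R.TailIn C ∧ S.TailIn C

/-- The ends of `G` in the sense of Halin: equivalence classes of rays. -/
def Ends (G : SimpleGraph V) : Type u :=
  { ω : Set (Ray G) // ∃ R : Ray G, ω = { S | RayEquiv G R S } }

/-- The end of a ray. -/
def Ray.end (G : SimpleGraph V) (R : Ray G) : Ends G :=
  ⟨{ S | RayEquiv G R S }, R, rfl⟩

/-- The end `ω` lives in the component `C` of `G - X`:  every ray in `ω` has a
tail in `C`.  (For genuine ends this is the statement `C = C(X,ω)`.) -/
def LivesIn {G : SimpleGraph V} (ω : Ends G) (X : Finset V)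
    (C : G.ComponentCompl (X : Set V)) : Prop :=
  ∀ R ∈ ω.1, R.TailIn C

/-- The basic open set `Ω(X,C)` of the end space. -/
def basicSet (G : SimpleGraph V) (X : Finset V) (C : G.ComponentCompl (X : Set V)) :
    Set (Ends G) :=
  { ω | LivesIn ω X C }

/-- The end space: the topology on `Ends G` generated by the sets `Ω(X,C)`. -/
instance endsTopology (G : SimpleGraph V) : TopologicalSpace (Ends G) :=
  TopologicalSpace.generateFrom
    { U | ∃ (X : Finset V) (C : G.ComponentCompl (X : Set V)), U = basicSet G X C }

section Directions

/-- The component `f(X)` chosen by the direction `f` at the finite vertex set `X`. -/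
def dirComp {G : SimpleGraph V} (f : G.end) (X : Finset V) : G.ComponentCompl (X : Set V) :=
  f.1 (Opposite.op X)


variable (G : SimpleGraph V)

/-- The ray `R` induces the direction `f` (i.e. `f = f_ω` for the end `ω` of `R`):
for every finite `X`, the component `f(X)` contains a tail of `R`. -/
def InducesDir {G : SimpleGraph V} (R : Ray G) (f : G.end) : Prop :=
  ∀ X : Finset V, R.TailIn (dirComp f X : Set V)

/-- The end `ω` induces the direction `f`, i.e. `f = f_ω`. -/
def EndInducesDir {G : SimpleGraph V} (ω : Ends G) (f : G.end) : Prop :=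
  ∀ (X : Finset V), ∀ R ∈ ω.1, R.TailIn (dirComp f X : Set V)

/-- A direction `f` is countably determined in `G` if some countable set of
directional choices `(X, C)` distinguishes `f` from every other direction. -/
def DirCountablyDetermined {G : SimpleGraph V} (f : G.end) : Prop :=
  ∃ D : Set ((X : Finset V) × G.ComponentCompl (X : Set V)), D.Countable ∧
    ∀ h : G.end, h ≠ f → ∃ p ∈ D,
      dirComp f p.1 = p.2 ∧ dirComp h p.1 ≠ p.2

/-- `G` is countably determined: some countable set of directional choices
distinguishes every two distinct directions of `G` from each other. -/
def GraphCountablyDetermined (G : SimpleGraph V) : Prop :=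
  ∃ D : Set ((X : Finset V) × G.ComponentCompl (X : Set V)), D.Countable ∧
    ∀ f h : G.end, f ≠ h → ∃ p ∈ D,
      (dirComp f p.1 = p.2 ∧ dirComp h p.1 ≠ p.2) ∨
      (dirComp h p.1 = p.2 ∧ dirComp f p.1 ≠ p.2)

/-- `R` is directional in `G`: the directional choices given by the finite
initial segments of `R` distinguish the direction induced by `R` from every
other direction of `G`. -/
def Directional {G : SimpleGraph V} (R : Ray G) : Prop :=
  ∀ h : G.end, (∃ X : Finset V, ¬ R.TailIn (dirComp h X : Set V)) →
    ∃ n : ℕ, ¬ R.TailIn (dirComp h (R.initSeg n) : Set V)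

/-- `R` is topological in `G`: the basic open sets `Ω(X_n, ω)`, for `X_n` the
first `n` vertices of `R` and `ω` the end of `R`, form a neighbourhood base at
`ω` in the end space of `G`. -/
def Topological {G : SimpleGraph V} (R : Ray G) : Prop :=
  ∀ U : Set (Ends G), IsOpen U → R.end G ∈ U →
    ∃ (n : ℕ) (C : G.ComponentCompl (R.initSeg n : Set V)),
      LivesIn (R.end G) (R.initSeg n) C ∧ basicSet G (R.initSeg n) C ⊆ U

end Directions

section Domination

variable (G : SimpleGraph V)

/-- `v` dominates the ray `R`: no finite vertex set avoiding `v` separates `v`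
from `R` (equivalently, there is an infinite `v`–`R` fan). -/
def DominatesRay (v : V) (R : Ray G) : Prop :=
  ∀ X : Finset V, v ∉ X → ∃ (u : V) (W : G.Walk v u),
    (∃ n, R.f n = u) ∧ ∀ w ∈ W.support, w ∉ (X : Set V)

/-- `v` dominates the end `ω`. -/
def DominatesEnd (v : V) (ω : Ends G) : Prop :=
  ∀ R ∈ ω.1, DominatesRay G v R

end Domination

/-- A double ray in `G`. -/
structure DoubleRay (G : SimpleGraph V) where
  f : ℤ → V
  inj : Function.Injective f
  adj : ∀ n : ℤ, G.Adj (f n) (f (n + 1))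

namespace DoubleRay

variable {G : SimpleGraph V}

/-- The positive tail of `D` lies in the end `ω`. -/
def PosTailIn (D : DoubleRay G) (ω : Ends G) : Prop :=
  ∃ R ∈ ω.1, ∃ N : ℤ, ∀ n : ℕ, R.f n = D.f (N + n)

/-- The negative tail of `D` lies in the end `ω`. -/
def NegTailIn (D : DoubleRay G) (ω : Ends G) : Prop :=
  ∃ R ∈ ω.1, ∃ N : ℤ, ∀ n : ℕ, R.f n = D.f (N - n)

end DoubleRay

/-- `P` is (the vertex set of) a generalised path in `G` with endpoints
`ω₁ ≠ ω₂`. -/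
def IsGenPath (G : SimpleGraph V) (P : Set V) (ω₁ ω₂ : Ends G) : Prop :=
  (∃ D : DoubleRay G, P = Set.range D.f ∧
    ((D.PosTailIn ω₁ ∧ D.NegTailIn ω₂) ∨ (D.PosTailIn ω₂ ∧ D.NegTailIn ω₁))) ∨
  (∃ (u v : V) (W : G.Walk u v), W.IsPath ∧ P = { x | x ∈ W.support } ∧
    ((DominatesEnd G u ω₁ ∧ DominatesEnd G v ω₂) ∨
     (DominatesEnd G u ω₂ ∧ DominatesEnd G v ω₁))) ∨
  (∃ R : Ray G, P = Set.range R.f ∧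
    ((R ∈ ω₁.1 ∧ DominatesEnd G (R.f 0) ω₂) ∨
     (R ∈ ω₂.1 ∧ DominatesEnd G (R.f 0) ω₁)))

/-- A sun in `G` centred at `ω`: pairwise vertex-disjoint generalised paths
`(P i, {ω, leaf i})` with pairwise distinct leaves `leaf i ≠ ω`, where either
all the `P i` are double rays with one tail in `leaf i` and another in `ω`, or
all the `P i` are rays in `leaf i` whose first vertices dominate `ω`. -/
def IsSun (G : SimpleGraph V) (ω : Ends G) {I : Type*}
    (P : I → Set V) (leaf : I → Ends G) : Prop :=
  (∀ i j, i ≠ j → Disjoint (P i) (P j)) ∧ Function.Injective leaf ∧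
  (∀ i, leaf i ≠ ω) ∧
  ((∀ i, ∃ D : DoubleRay G, P i = Set.range D.f ∧
      ((D.PosTailIn (leaf i) ∧ D.NegTailIn ω) ∨
       (D.PosTailIn ω ∧ D.NegTailIn (leaf i)))) ∨
   (∀ i, ∃ R : Ray G, P i = Set.range R.f ∧ R ∈ (leaf i).1 ∧
      DominatesEnd G (R.f 0) ω))


/-- The relation whose symmetric closure gives `K^{ℵ₁}` with a ray attached to
every vertex: `Sum.inl w` are the vertices of the complete graph, and
`Sum.inr (w, n)` is the `(n+1)`-st vertex of the ray `R_w` attached at `w`. -/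
def kayRel (W : Type u) : (W ⊕ W × ℕ) → (W ⊕ W × ℕ) → Prop := fun x y =>
  (∃ w w' : W, w ≠ w' ∧ x = Sum.inl w ∧ y = Sum.inl w') ∨
  (∃ w : W, x = Sum.inl w ∧ y = Sum.inr (w, 0)) ∨
  (∃ (w : W) (n : ℕ), x = Sum.inr (w, n) ∧ y = Sum.inr (w, n + 1))

/-- The graph obtained from the complete graph on `W` by attaching a new
disjoint ray at every vertex. -/
def kayGraph (W : Type u) : SimpleGraph (W ⊕ W × ℕ) := SimpleGraph.fromRel (kayRel W)


/-! Countably many directional choices `(X, C)` have separators `X` meeting only countably many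
of the rays `R_w`, so some `w` is avoided, together with its ray, by all of them. The direction
of `R_w` differs from `f`, since deleting `w` cuts `R_w` off from the clique. But whenever `X`
avoids `w` and `R_w`, the component of `G - X` containing `R_w` contains `w`, hence the tail of
any ray in the clique, so it is `f(X)`: no choice of the family tells the two directions apart. -/

namespace SimpleGraph.ComponentCompl

variable {G : SimpleGraph V} {K : Set V}

theorem subset_of_forall_adj {S : Set V}
    (hS : ∀ ⦃a b⦄, a ∉ K → b ∉ K → G.Adj a b → a ∈ S → b ∈ S)
    {C : G.ComponentCompl K} {v : V} (hvC : v ∈ C) (hvS : v ∈ S) : (C : Set V) ⊆ S := by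
  let inS : G.ComponentCompl K → Prop := ComponentCompl.lift (fun v _ => v ∈ S)
    fun _ _ hv hw hadj => propext ⟨hS hv hw hadj, hS hw hv hadj.symm⟩
  obtain ⟨-, rfl⟩ := hvC
  rintro u ⟨hu, huC⟩
  change inS (G.componentComplMk hu)
  rwa [huC]

end SimpleGraph.ComponentCompl

namespace Ray

variable {G : SimpleGraph V} (R : Ray G)

theorem exists_tail_notMem {K : Set V} (hK : K.Finite) : ∃ N, ∀ n, N ≤ n → R.f n ∉ K := by
  obtain ⟨M, hM⟩ := (hK.preimage R.inj.injOn).bddAbove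
  exact ⟨M + 1, fun n hn hnK => by have := hM hnK; omega⟩

theorem tailIn_of_mem {K : Set V} {C : G.ComponentCompl K} {N : ℕ}
    (hN : ∀ n, N ≤ n → R.f n ∉ K) (hC : R.f N ∈ C) : R.TailIn C := by
  refine ⟨N, fun n hn => ?_⟩
  induction n, hn using Nat.le_induction with
  | base => exact hC
  | succ n hn ih => exact ComponentCompl.mem_of_adj _ _ ih (hN _ (by omega)) (R.adj n)

theorem eq_of_tailIn {K : Set V} {C D : G.ComponentCompl K}
    (hC : R.TailIn C) (hD : R.TailIn D) : C = D := by
  obtain ⟨N, hN⟩ := hC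
  obtain ⟨M, hM⟩ := hD
  obtain ⟨_, hNC⟩ := hN (max N M) (le_max_left _ _)
  obtain ⟨_, hMD⟩ := hM (max N M) (le_max_right _ _)
  exact hNC.symm.trans hMD

noncomputable def tailComp (K : Finset V) : G.ComponentCompl K :=
  G.componentComplMk ((R.exists_tail_notMem K.finite_toSet).choose_spec _ le_rfl)

theorem tailIn_tailComp (K : Finset V) : R.TailIn (R.tailComp K) :=
  R.tailIn_of_mem (R.exists_tail_notMem K.finite_toSet).choose_spec (G.componentComplMk_mem _)

noncomputable def dir : G.end :=
  ⟨fun K => R.tailComp K.unop, fun {K L} h => by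
    refine R.eq_of_tailIn ?_ (R.tailIn_tailComp L.unop)
    obtain ⟨N, hN⟩ := R.tailIn_tailComp K.unop
    exact ⟨N, fun n hn =>
      ComponentCompl.subset_hom _ (CategoryTheory.le_of_op_hom h) (hN n hn)⟩⟩

theorem inducesDir_dir : InducesDir R R.dir :=
  R.tailIn_tailComp

end Ray

namespace kayGraph

variable {W : Type u}

theorem adj_inl_inl {w w' : W} (h : w ≠ w') : (kayGraph W).Adj (.inl w) (.inl w') := by
  rw [kayGraph, fromRel_adj]
  exact ⟨by simpa using h, .inl (.inl ⟨w, w', h, rfl, rfl⟩)⟩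

theorem adj_inl_inr_zero (w : W) : (kayGraph W).Adj (.inl w) (.inr (w, 0)) := by
  rw [kayGraph, fromRel_adj]
  exact ⟨by simp, .inl (.inr (.inl ⟨w, rfl, rfl⟩))⟩

theorem adj_inr_succ (w : W) (n : ℕ) : (kayGraph W).Adj (.inr (w, n)) (.inr (w, n + 1)) := by
  rw [kayGraph, fromRel_adj]
  exact ⟨by simp, .inl (.inr (.inr ⟨w, n, rfl, rfl⟩))⟩

theorem eq_of_adj_inr {w : W} {n : ℕ} {y : W ⊕ W × ℕ}
    (h : (kayGraph W).Adj (.inr (w, n)) y) :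
    y = .inl w ∨ ∃ m, y = .inr (w, m) := by
  rw [kayGraph, fromRel_adj] at h
  obtain ⟨-, h | h⟩ := h <;>
    rcases h with ⟨a, b, hab, h1, h2⟩ | ⟨a, h1, h2⟩ | ⟨a, m, h1, h2⟩ <;>
    simp_all

/-- The ray `R_w` attached at `w`, starting at the neighbour `inr (w, 0)` of `inl w`. -/
def attachedRay (w : W) : Ray (kayGraph W) where
  f n := .inr (w, n)
  inj _ _ h := by simpa using h
  adj := adj_inr_succ w

/-- The clique vertex whose attached ray contains `x`, or `x` itself. -/
def base : W ⊕ W × ℕ → W := Sum.elim id Prod.fst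

variable {K : Set (W ⊕ W × ℕ)}

theorem attachedRay_tailIn_componentComplMk_inl {w : W} (hw : .inl w ∉ K)
    (hK : ∀ n, .inr (w, n) ∉ K) :
    (attachedRay w).TailIn ((kayGraph W).componentComplMk hw) :=
  (attachedRay w).tailIn_of_mem (N := 0) (fun n _ => hK n) <|
    ComponentCompl.mem_of_adj _ _ (componentComplMk_mem _ _) (hK 0) (adj_inl_inr_zero w)

theorem tailIn_componentComplMk_inl_of_forall_inl (hK : K.Finite) {R : Ray (kayGraph W)}
    (hR : ∀ n, ∃ w : W, R.f n = .inl w) {w : W} (hw : .inl w ∉ K) :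
    R.TailIn ((kayGraph W).componentComplMk hw) := by
  obtain ⟨N, hN⟩ := R.exists_tail_notMem hK
  refine R.tailIn_of_mem hN ?_
  obtain ⟨w', hw'⟩ := hR N
  have hw'K := hN N le_rfl
  rw [hw'] at hw'K ⊢
  rcases eq_or_ne w w' with rfl | hne
  · exact componentComplMk_mem _ _
  · exact ComponentCompl.mem_of_adj _ _ (componentComplMk_mem _ _) hw'K (adj_inl_inl hne)

theorem componentCompl_subset_range_attachedRay {w : W} (hw : .inl w ∈ K)
    {C : (kayGraph W).ComponentCompl K} {n : ℕ} (hn : (attachedRay w).f n ∈ C) :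
    (C : Set _) ⊆ Set.range (attachedRay w).f := by
  refine ComponentCompl.subset_of_forall_adj (S := Set.range (attachedRay w).f) ?_ hn ⟨n, rfl⟩
  rintro a b - hb hab ⟨m, rfl⟩
  rcases eq_of_adj_inr hab with rfl | ⟨m', rfl⟩
  · exact absurd hw hb
  · exact ⟨m', rfl⟩

variable {f : (kayGraph W).end} {R : Ray (kayGraph W)}

theorem dir_attachedRay_ne (hR : ∀ n, ∃ w : W, R.f n = .inl w) (hind : InducesDir R f) (w : W) :
    (attachedRay w).dir ≠ f := by
  intro he
  let X : Finset (W ⊕ W × ℕ) := {.inl w}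
  obtain ⟨N, hN⟩ := hind X
  obtain ⟨M, hM⟩ := (attachedRay w).inducesDir_dir X
  have hsub := componentCompl_subset_range_attachedRay (by simp [X]) (hM M le_rfl)
  obtain ⟨m, hm⟩ := hsub (he ▸ hN N le_rfl : R.f N ∈ dirComp (attachedRay w).dir X)
  obtain ⟨w', hw'⟩ := hR N
  simp [attachedRay, hw'] at hm

theorem dirComp_dir_attachedRay (hR : ∀ n, ∃ w : W, R.f n = .inl w) (hind : InducesDir R f)
    {w : W} {X : Finset (W ⊕ W × ℕ)} (hX : ∀ x ∈ X, base x ≠ w) :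
    dirComp (attachedRay w).dir X = dirComp f X :=
  calc dirComp (attachedRay w).dir X
      = (kayGraph W).componentComplMk (fun h => hX (.inl w) h rfl) :=
        (attachedRay w).eq_of_tailIn ((attachedRay w).inducesDir_dir X)
          (attachedRay_tailIn_componentComplMk_inl _ fun _ h => hX _ h rfl)
    _ = dirComp f X :=
        R.eq_of_tailIn (tailIn_componentComplMk_inl_of_forall_inl X.finite_toSet hR _) (hind X)

theorem not_dirCountablyDetermined [Uncountable W]
    (hR : ∀ n, ∃ w : W, R.f n = .inl w) (hind : InducesDir R f) :
    ¬ DirCountablyDetermined f := by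
  rintro ⟨D, hD, hdist⟩
  have hB : (⋃ p ∈ D, base '' (p.1 : Set (W ⊕ W × ℕ))).Countable :=
    hD.biUnion fun p _ => (p.1.finite_toSet.image base).countable
  obtain ⟨w, hw⟩ : ∃ w, w ∉ ⋃ p ∈ D, base '' (p.1 : Set (W ⊕ W × ℕ)) := by
    by_contra! h
    exact Set.not_countable_univ (Set.eq_univ_of_forall h ▸ hB)
  have hX : ∀ p ∈ D, ∀ x ∈ p.1, base x ≠ w := fun p hp x hx hxw =>
    hw (Set.mem_biUnion hp ⟨x, hx, hxw⟩)
  obtain ⟨p, hp, hfp, hhp⟩ := hdist _ (dir_attachedRay_ne hR hind w)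
  exact hhp (dirComp_dir_attachedRay hR hind (hX p hp) ▸ hfp)

end kayGraph

/-- For `W` of size `ℵ₁`, the direction of `kayGraph W` induced by (any of) the
rays lying inside the complete graph `K^{ℵ₁}` is not countably determined. -/
theorem stmt_1 (W : Type) (hW : Cardinal.mk W = Cardinal.aleph 1)
    (f : (kayGraph W).end) (R : Ray (kayGraph W))
    (hR : ∀ n, ∃ w : W, R.f n = Sum.inl w) (hind : InducesDir R f) :
    ¬ DirCountablyDetermined f := by
  have : Uncountable W := Cardinal.aleph0_lt_mk_iff.1 (hW ▸ Cardinal.aleph0_lt_aleph_one)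
  exact kayGraph.not_dirCountablyDetermined hR hind
end

section
/- If G is a graph, ω an end of G, and G contains an uncountable collection of pairwise vertex-disjoint generalised paths (P^i, {ω, ω^i}) with the ω^i pairwise distinct ends different from ω, then ω has no countable neighbourhood base in the end space Ω(G). -/
/-! Common definitions: rays, ends (à la Halin), the end space, directions
(via Mathlib's `SimpleGraph.end`), domination, generalised paths, etc. -/

open Classical SimpleGraph

universe u

variable {V : Type u}

/-! If `𝓝 ω` were countably generated, it would be generated by countably many basic sets
`Ω(X, C)`, and the union of their finite separators `X` would be countable. The paths are
disjoint and uncountably many, so some `Pⁱ` avoids all of these `X`. A generalised path avoiding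
`X` lies in one component of `G - X`, and both of its endpoints live there; hence `ωⁱ` lies in
every generating set, so in every neighbourhood of `ω`. But some `Ω(X, C)` separates `ω` from
`ωⁱ ≠ ω`.
-/

theorem Set.Countable.exists_disjoint_of_pairwise_disjoint {ι α : Type*} [Uncountable ι]
    {Y : Set α} (hY : Y.Countable) {P : ι → Set α}
    (hP : Pairwise fun i j => Disjoint (P i) (P j)) : ∃ i, Disjoint (P i) Y := by
  have hmeet : {i | ¬ Disjoint (P i) Y}.Countable := by
    refine (hY.biUnion fun y _ =>
      (subsingleton_setOfPred_mem_iff_pairwise_disjoint.2 hP y).countable).mono ?_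
    intro i hi
    obtain ⟨y, hyP, hyY⟩ := Set.not_disjoint_iff.1 hi
    exact Set.mem_biUnion hyY hyP
  by_contra! h
  exact not_countable_univ (hmeet.mono fun i _ => h i)

theorem Filter.exists_countable_subset_eq_generate {α : Type*} {f : Filter α}
    [f.IsCountablyGenerated] {𝒮 : Set (Set α)} (hf : f = generate 𝒮) :
    ∃ 𝒯 ⊆ 𝒮, 𝒯.Countable ∧ f = generate 𝒯 := by
  obtain ⟨t, ht, hbasis⟩ := (hf ▸ hasBasis_generate 𝒮).exists_antitone_subbasis
  refine ⟨⋃ n, t n, Set.iUnion_subset fun n => (ht n).2,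
    Set.countable_iUnion fun n => (ht n).1.countable, le_antisymm ?_ ?_⟩
  · refine le_generate_iff.2 fun U hU => ?_
    obtain ⟨n, hUn⟩ := Set.mem_iUnion.1 hU
    exact hf ▸ mem_generate_of_mem ((ht n).2 hUn)
  · intro U hU
    obtain ⟨n, -, hnU⟩ := hbasis.1.mem_iff.1 hU
    exact mem_generate_iff.2 ⟨t n, Set.subset_iUnion t n, (ht n).1, hnU⟩

namespace SimpleGraph.ComponentCompl

variable {G : SimpleGraph V} {K : Set V} {C : G.ComponentCompl K}

theorem eq_of_mem_of_mem {D : G.ComponentCompl K} {v : V} (hC : v ∈ C) (hD : v ∈ D) :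
    C = D :=
  of_not_not fun h => Set.disjoint_left.1 (ComponentCompl.pairwise_disjoint h) hC hD

theorem mem_iff_of_adj {u v : V} (hu : u ∉ K) (hv : v ∉ K) (huv : G.Adj u v) :
    u ∈ C ↔ v ∈ C :=
  ⟨fun h => mem_of_adj u v h hv huv, fun h => mem_of_adj v u h hu huv.symm⟩

theorem mem_iff_of_mem_support {u v w : V} (W : G.Walk u v) (hW : ∀ x ∈ W.support, x ∉ K)
    (hw : w ∈ W.support) : u ∈ C ↔ w ∈ C := by
  induction W with
  | nil => rw [Walk.mem_support_nil_iff.1 hw]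
  | cons huv W ih =>
    rw [Walk.support_cons, List.mem_cons] at hw
    rw [Walk.support_cons, List.forall_mem_cons] at hW
    rcases hw with rfl | hw
    · rfl
    · exact (mem_iff_of_adj hW.1 (hW.2 _ W.start_mem_support) huv).trans (ih hW.2 hw)

end SimpleGraph.ComponentCompl

section

variable {G : SimpleGraph V} {K : Set V} {C : G.ComponentCompl K}

theorem SimpleGraph.Walk.support_subset_of_mem {u v w : V} (W : G.Walk u v)
    (hW : Disjoint {x | x ∈ W.support} K) (hw : w ∈ W.support) (hwC : w ∈ C) :
    {x | x ∈ W.support} ⊆ C := by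
  have hWK : ∀ x ∈ W.support, x ∉ K := fun x hx => Set.disjoint_left.1 hW hx
  intro x hx
  exact (ComponentCompl.mem_iff_of_mem_support W hWK hx).1
    ((ComponentCompl.mem_iff_of_mem_support W hWK hw).2 hwC)

namespace Ray

def drop (R : Ray G) (k : ℕ) : Ray G where
  f n := R.f (n + k)
  inj _ _ h := Nat.add_right_cancel (R.inj h)
  adj n := by simpa only [Nat.add_right_comm] using R.adj (n + k)

theorem mem_initSeg_iff (R : Ray G) {n N : ℕ} : R.f n ∈ R.initSeg N ↔ n < N :=
  R.inj.mem_finset_image.trans Finset.mem_range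

theorem eventually_notMem (R : Ray G) (X : Finset V) : ∃ N, ∀ n, N ≤ n → R.f n ∉ X := by
  obtain ⟨N, hN⟩ := (X.finite_toSet.preimage R.inj.injOn).bddAbove
  exact ⟨N + 1, fun n hn hX => by have := hN hX; omega⟩

theorem mem_iff_of_le (R : Ray G) {N : ℕ} (hK : ∀ n, N ≤ n → R.f n ∉ K) {m n : ℕ}
    (hm : N ≤ m) (hn : N ≤ n) : R.f m ∈ C ↔ R.f n ∈ C := by
  have iff_start : ∀ n, N ≤ n → (R.f n ∈ C ↔ R.f N ∈ C) := by
    intro n hn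
    induction n, hn using Nat.le_induction with
    | base => rfl
    | succ n hn ih =>
      exact (ComponentCompl.mem_iff_of_adj (hK n hn) (hK (n + 1) (by omega)) (R.adj n)).symm.trans
        ih
  exact (iff_start m hm).trans (iff_start n hn).symm

theorem tailIn_of_mem_s6 (R : Ray G) {N : ℕ} (hK : ∀ n, N ≤ n → R.f n ∉ K)
    (hN : R.f N ∈ C) : R.TailIn C :=
  ⟨N, fun _ hn => (R.mem_iff_of_le hK hn le_rfl).2 hN⟩

theorem exists_tailIn (R : Ray G) (X : Finset V) :
    ∃ C : G.ComponentCompl (X : Set V), R.TailIn C := by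
  obtain ⟨N, hN⟩ := R.eventually_notMem X
  exact ⟨_, R.tailIn_of_mem_s6 hN (G.componentComplMk_mem (hN N le_rfl))⟩

theorem TailIn.eq {R : Ray G} {D : G.ComponentCompl K} (hC : R.TailIn C) (hD : R.TailIn D) :
    C = D := by
  obtain ⟨M, hM⟩ := hC
  obtain ⟨N, hN⟩ := hD
  exact ComponentCompl.eq_of_mem_of_mem (hM _ (le_max_left M N)) (hN _ (le_max_right M N))

theorem range_subset_of_mem (R : Ray G) (hK : Disjoint (Set.range R.f) K) {m : ℕ}
    (hm : R.f m ∈ C) : Set.range R.f ⊆ C := by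
  rintro _ ⟨n, rfl⟩
  exact (R.mem_iff_of_le (fun n _ => Set.disjoint_left.1 hK ⟨n, rfl⟩)
    (Nat.zero_le m) (Nat.zero_le n)).1 hm

end Ray

theorem DoubleRay.range_subset_of_mem (D : DoubleRay G) (hK : Disjoint (Set.range D.f) K)
    {m : ℤ} (hm : D.f m ∈ C) : Set.range D.f ⊆ C := by
  have step : ∀ n, D.f n ∈ C ↔ D.f (n + 1) ∈ C := fun n =>
    ComponentCompl.mem_iff_of_adj (Set.disjoint_left.1 hK ⟨n, rfl⟩)
      (Set.disjoint_left.1 hK ⟨n + 1, rfl⟩) (D.adj n)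
  have iff_zero : ∀ n, D.f n ∈ C ↔ D.f 0 ∈ C := by
    intro n
    induction n using Int.induction_on with
    | zero => rfl
    | succ n ih => exact (step n).symm.trans ih
    | pred n ih => rw [step, sub_add_cancel]; exact ih
  rintro _ ⟨n, rfl⟩
  exact (iff_zero n).2 ((iff_zero m).1 hm)

namespace RayEquiv

theorem refl (R : Ray G) : RayEquiv G R R := fun X =>
  let ⟨C, hC⟩ := R.exists_tailIn X
  ⟨C, hC, hC⟩

theorem symm {R S : Ray G} (h : RayEquiv G R S) : RayEquiv G S R := fun X =>
  let ⟨C, hR, hS⟩ := h X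
  ⟨C, hS, hR⟩

theorem trans {R S T : Ray G} (h₁ : RayEquiv G R S) (h₂ : RayEquiv G S T) :
    RayEquiv G R T := fun X =>
  let ⟨C, hR, hS⟩ := h₁ X
  let ⟨_, hS', hT⟩ := h₂ X
  ⟨C, hR, hS'.eq hS ▸ hT⟩

theorem drop (R : Ray G) (k : ℕ) : RayEquiv G R (R.drop k) := fun X =>
  let ⟨C, N, hN⟩ := R.exists_tailIn X
  ⟨C, ⟨N, hN⟩, N, fun n hn => hN (n + k) (by omega)⟩

end RayEquiv

end

namespace Ends

variable {G : SimpleGraph V} {X : Finset V} {C : G.ComponentCompl (X : Set V)}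

theorem exists_mem (ω : Ends G) : ∃ R, R ∈ ω.1 :=
  let ⟨R, hR⟩ := ω.2
  ⟨R, hR ▸ RayEquiv.refl R⟩

theorem mem_of_rayEquiv {ω : Ends G} {R S : Ray G} (hR : R ∈ ω.1) (h : RayEquiv G R S) :
    S ∈ ω.1 := by
  obtain ⟨R₀, hR₀⟩ := ω.2
  rw [hR₀] at hR ⊢
  exact RayEquiv.trans hR h

theorem exists_ray_notMem (ω : Ends G) (v : V) : ∃ R ∈ ω.1, v ∉ Set.range R.f := by
  obtain ⟨R, hR⟩ := ω.exists_mem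
  by_cases hv : v ∈ Set.range R.f
  · obtain ⟨k, rfl⟩ := hv
    refine ⟨R.drop (k + 1), mem_of_rayEquiv hR (RayEquiv.drop R _), ?_⟩
    rintro ⟨n, hn⟩
    have := R.inj hn
    omega
  · exact ⟨R, hR, hv⟩

theorem exists_livesIn (ω : Ends G) (X : Finset V) :
    ∃ C : G.ComponentCompl (X : Set V), LivesIn ω X C := by
  obtain ⟨R, hR⟩ := ω.2
  obtain ⟨C, hC⟩ := R.exists_tailIn X
  refine ⟨C, fun S hS => ?_⟩
  rw [hR] at hS
  obtain ⟨D, hRD, hSD⟩ := hS X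
  exact hRD.eq hC ▸ hSD

theorem livesIn_of_tailIn {ω : Ends G} {R : Ray G} (hR : R ∈ ω.1) (h : R.TailIn C) :
    LivesIn ω X C := by
  obtain ⟨D, hD⟩ := ω.exists_livesIn X
  rwa [(hD R hR).eq h] at hD

theorem eq_of_livesIn {ω ω' : Ends G}
    (h : ∀ (X : Finset V) (C : G.ComponentCompl (X : Set V)),
      LivesIn ω X C → LivesIn ω' X C) : ω = ω' := by
  obtain ⟨_, R, rfl⟩ := ω
  obtain ⟨_, R', rfl⟩ := ω'
  have hRR' : RayEquiv G R R' := fun X =>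
    let ⟨C, hC⟩ := (R.end G).exists_livesIn X
    ⟨C, hC R (RayEquiv.refl R), h X C hC R' (RayEquiv.refl R')⟩
  exact Subtype.ext (Set.ext fun S => ⟨hRR'.symm.trans, hRR'.trans⟩)

theorem exists_livesIn_not_livesIn {ω ω' : Ends G} (h : ω ≠ ω') :
    ∃ (X : Finset V) (C : G.ComponentCompl (X : Set V)),
      LivesIn ω X C ∧ ¬ LivesIn ω' X C := by
  by_contra! h'
  exact h (eq_of_livesIn h')

end Ends

theorem DominatesEnd.mem_of_livesIn {G : SimpleGraph V} {v : V} {ω : Ends G}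
    (hv : DominatesEnd G v ω) {X : Finset V} (hvX : v ∉ X) {C : G.ComponentCompl (X : Set V)}
    (hω : LivesIn ω X C) : v ∈ C := by
  obtain ⟨R, hR, hvR⟩ := ω.exists_ray_notMem v
  obtain ⟨N, hN⟩ := hω R hR
  have hvY : v ∉ X ∪ R.initSeg N := by
    rw [Finset.mem_union, not_or]
    exact ⟨hvX, fun h => hvR ((Finset.mem_image.1 h).imp fun _ => And.right)⟩
  obtain ⟨_, W, ⟨n, rfl⟩, hW⟩ := hv R hR _ hvY
  have hnN : N ≤ n := by
    by_contra! h
    exact hW _ W.end_mem_support (Finset.mem_union_right _ (R.mem_initSeg_iff.2 h))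
  have hWX : ∀ x ∈ W.support, x ∉ (X : Set V) := fun x hx hxX =>
    hW x hx (Finset.mem_union_left _ hxX)
  exact (ComponentCompl.mem_iff_of_mem_support W hWX W.end_mem_support).2 (hN n hnN)

/-- The two ways in which a generalised path `P` can have `ω` as an endpoint. -/
def ReachesEnd (G : SimpleGraph V) (P : Set V) (ω : Ends G) : Prop :=
  (∃ R ∈ ω.1, Set.range R.f ⊆ P) ∨ ∃ v ∈ P, DominatesEnd G v ω

section GenPath

variable {G : SimpleGraph V} {P : Set V} {ω ω₁ ω₂ : Ends G} {X : Finset V}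
  {C : G.ComponentCompl (X : Set V)}

theorem ReachesEnd.exists_mem_of_livesIn (h : ReachesEnd G P ω) (hPX : Disjoint P X)
    (hω : LivesIn ω X C) : ∃ v ∈ P, v ∈ C := by
  rcases h with ⟨R, hR, hRP⟩ | ⟨v, hvP, hv⟩
  · obtain ⟨N, hN⟩ := hω R hR
    exact ⟨R.f N, hRP ⟨N, rfl⟩, hN N le_rfl⟩
  · exact ⟨v, hvP, hv.mem_of_livesIn (Set.disjoint_left.1 hPX hvP) hω⟩

theorem ReachesEnd.livesIn_of_subset (h : ReachesEnd G P ω) (hPC : P ⊆ C) : LivesIn ω X C := by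
  rcases h with ⟨R, hR, hRP⟩ | ⟨v, hvP, hv⟩
  · exact Ends.livesIn_of_tailIn hR ⟨0, fun n _ => hPC (hRP ⟨n, rfl⟩)⟩
  · obtain ⟨D, hD⟩ := ω.exists_livesIn X
    have hvD := hv.mem_of_livesIn (ComponentCompl.notMem_of_mem (hPC hvP)) hD
    rwa [ComponentCompl.eq_of_mem_of_mem hvD (hPC hvP)] at hD

theorem DoubleRay.PosTailIn.reachesEnd {D : DoubleRay G} (h : D.PosTailIn ω) :
    ReachesEnd G (Set.range D.f) ω :=
  let ⟨R, hR, _, hN⟩ := h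
  .inl ⟨R, hR, Set.range_subset_iff.2 fun n => ⟨_, (hN n).symm⟩⟩

theorem DoubleRay.NegTailIn.reachesEnd {D : DoubleRay G} (h : D.NegTailIn ω) :
    ReachesEnd G (Set.range D.f) ω :=
  let ⟨R, hR, _, hN⟩ := h
  .inl ⟨R, hR, Set.range_subset_iff.2 fun n => ⟨_, (hN n).symm⟩⟩

theorem IsGenPath.reachesEnd (hP : IsGenPath G P ω₁ ω₂) :
    ReachesEnd G P ω₁ ∧ ReachesEnd G P ω₂ := by
  rcases hP with ⟨D, rfl, h | h⟩ | ⟨u, v, W, -, rfl, h | h⟩ | ⟨R, rfl, h | h⟩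
  · exact ⟨h.1.reachesEnd, h.2.reachesEnd⟩
  · exact ⟨h.2.reachesEnd, h.1.reachesEnd⟩
  · exact ⟨.inr ⟨u, W.start_mem_support, h.1⟩, .inr ⟨v, W.end_mem_support, h.2⟩⟩
  · exact ⟨.inr ⟨v, W.end_mem_support, h.2⟩, .inr ⟨u, W.start_mem_support, h.1⟩⟩
  · exact ⟨.inl ⟨R, h.1, subset_rfl⟩, .inr ⟨R.f 0, ⟨0, rfl⟩, h.2⟩⟩
  · exact ⟨.inr ⟨R.f 0, ⟨0, rfl⟩, h.2⟩, .inl ⟨R, h.1, subset_rfl⟩⟩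

theorem IsGenPath.subset_of_mem (hP : IsGenPath G P ω₁ ω₂) {K : Set V} (hPK : Disjoint P K)
    {C : G.ComponentCompl K} {v : V} (hvP : v ∈ P) (hvC : v ∈ C) : P ⊆ C := by
  rcases hP with ⟨D, rfl, -⟩ | ⟨u, w, W, -, rfl, -⟩ | ⟨R, rfl, -⟩
  · obtain ⟨m, rfl⟩ := hvP
    exact D.range_subset_of_mem hPK hvC
  · exact W.support_subset_of_mem hPK hvP hvC
  · obtain ⟨m, rfl⟩ := hvP
    exact R.range_subset_of_mem hPK hvC

theorem IsGenPath.livesIn (hP : IsGenPath G P ω₁ ω₂) (hPX : Disjoint P X)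
    (hω₁ : LivesIn ω₁ X C) : LivesIn ω₂ X C := by
  obtain ⟨v, hvP, hvC⟩ := hP.reachesEnd.1.exists_mem_of_livesIn hPX hω₁
  exact hP.reachesEnd.2.livesIn_of_subset (hP.subset_of_mem hPX hvP hvC)

end GenPath

theorem nhds_eq_generate_basicSet {G : SimpleGraph V} (ω : Ends G) :
    nhds ω = Filter.generate {U | ω ∈ U ∧ ∃ X C, U = basicSet G X C} :=
  TopologicalSpace.nhds_generateFrom.trans (Filter.generate_eq_biInf _).symm

theorem basicSet_mem_nhds {G : SimpleGraph V} {ω : Ends G} {X : Finset V}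
    {C : G.ComponentCompl (X : Set V)} (h : LivesIn ω X C) : basicSet G X C ∈ nhds ω :=
  (TopologicalSpace.isOpen_generateFrom_of_mem
    (g := {U | ∃ X C, U = basicSet G X C}) ⟨X, C, rfl⟩).mem_nhds h

theorem stmt_6_general {V : Type u} (G : SimpleGraph V) (ω : Ends G)
    (I : Type u) [Uncountable I] (P : I → Set V) (leaf : I → Ends G)
    (hdisj : ∀ i j, i ≠ j → Disjoint (P i) (P j))
    (hne : ∀ i, leaf i ≠ ω)
    (hpath : ∀ i, IsGenPath G (P i) ω (leaf i)) :
    ¬ (nhds ω).IsCountablyGenerated := by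
  intro hcg
  obtain ⟨𝒯, h𝒯, h𝒯c, hω𝒯⟩ :=
    Filter.exists_countable_subset_eq_generate (nhds_eq_generate_basicSet ω)
  choose! X C hXC using fun U (hU : U ∈ 𝒯) => (h𝒯 hU).2
  have hYc : (⋃ U ∈ 𝒯, (X U : Set V)).Countable :=
    h𝒯c.biUnion fun U _ => (X U).countable_toSet
  obtain ⟨i, hi⟩ := hYc.exists_disjoint_of_pairwise_disjoint fun i j => hdisj i j
  have hleaf : pure (leaf i) ≤ nhds ω := by
    rw [hω𝒯, Filter.le_generate_iff]
    intro U hU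
    have hωU := (h𝒯 hU).1
    rw [hXC U hU] at hωU ⊢
    refine (hpath i).livesIn (hi.mono_right ?_) hωU
    exact Set.subset_biUnion_of_mem (u := fun U => (X U : Set V)) hU
  obtain ⟨X₀, C₀, hω, hleaf₀⟩ := Ends.exists_livesIn_not_livesIn (hne i).symm
  exact hleaf₀ (hleaf (basicSet_mem_nhds hω))

/-- If `G` contains an uncountable collection of pairwise vertex-disjoint
generalised paths `(Pⁱ, {ω, ωⁱ})` with the `ωⁱ` pairwise distinct ends
different from `ω`, then `ω` has no countable neighbourhood base in `Ω(G)`. -/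
theorem stmt_6 {V : Type u} (G : SimpleGraph V) (ω : Ends G)
    (I : Type u) [Uncountable I] (P : I → Set V) (leaf : I → Ends G)
    (hdisj : ∀ i j, i ≠ j → Disjoint (P i) (P j))
    (hinj : Function.Injective leaf) (hne : ∀ i, leaf i ≠ ω)
    (hpath : ∀ i, IsGenPath G (P i) ω (leaf i)) :
    ¬ (nhds ω).IsCountablyGenerated :=
  stmt_6_general G ω I P leaf hdisj hne hpath
end
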